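/- For every ψ ∈ 𝔉 one has (−H̄+λ∘)(1−G)ψ = (−H̄ − A* + λ∘)ψ in 𝔥₋₁; consequently the operator (H̄ + A*) restricted to 𝔇 takes values in 𝔉, and for ψ ∈ 𝔇 one has A_Sψ = (A − (1−G*)S)ψ∘ ∈ 𝔉, where ψ∘ := ψ − Gψ; hence H_S = H̄ + A* + A_S maps 𝔇 into 𝔉. -/

import Mathlib

open scoped InnerProductSpace ComplexConjugate

noncomputable section

local notation "⟪" x ", " y "⟫" => @inner ℂ _ _ x y

/-- Abstract context for the paper "On the resolvent of H+A*+A":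
`F` is the Hilbert space `𝔉`, `H1` is the space `𝔥₁ = dom(H)` endowed with the graph
norm, `Hm1` is the dual space `𝔥₋₁`.  `j1 : 𝔥₁ ↪ 𝔉` and `jm : 𝔉 ↪ 𝔥₋₁` are the dense
inclusions, `Hop` is `H` viewed as a bounded operator `𝔥₁ → 𝔉`, `Hbar` is its closure
`H̄ : 𝔉 → 𝔥₋₁`, `lamInf = inf σ(H)`, `res = ρ(H)`, `RF z = (-H+z)⁻¹ : 𝔉 → 𝔥₁`,
`RM z` is its extension `𝔥₋₁ → 𝔉`, `pair` is the duality pairing between `𝔥₋₁` and `𝔥₁`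
(conjugate-linear in the first variable) extending the scalar product of `𝔉`,
`ns s` is the scale norm `‖ψ‖_s = ‖(H²+1)^{s/2}ψ‖` on `𝔥₁` (`0 ≤ s ≤ 1`),
`A ∈ 𝔅(𝔥₁,𝔉)` and `Astar : 𝔉 → 𝔥₋₁` is its dual-pairing adjoint. -/
structure Ctx (F H1 Hm1 : Type*)
    [NormedAddCommGroup F] [InnerProductSpace ℂ F] [CompleteSpace F]
    [NormedAddCommGroup H1] [InnerProductSpace ℂ H1] [CompleteSpace H1]
    [NormedAddCommGroup Hm1] [InnerProductSpace ℂ Hm1] [CompleteSpace Hm1] where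
  j1 : H1 →L[ℂ] F
  jm : F →L[ℂ] Hm1
  Hop : H1 →L[ℂ] F
  Hbar : F →L[ℂ] Hm1
  lamInf : ℝ
  res : Set ℂ
  RF : ℂ → (F →L[ℂ] H1)
  RM : ℂ → (Hm1 →L[ℂ] F)
  pair : Hm1 → H1 → ℂ
  ns : ℝ → H1 → ℝ
  A : H1 →L[ℂ] F
  Astar : F →L[ℂ] Hm1
  j1_inj : Function.Injective j1
  j1_dense : DenseRange j1
  jm_inj : Function.Injective jm
  jm_dense : DenseRange jm
  /-- the norm of `𝔥₁` is the graph norm of `H` -/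
  norm1_sq : ∀ ψ : H1, ‖ψ‖ ^ 2 = ‖j1 ψ‖ ^ 2 + ‖Hop ψ‖ ^ 2
  /-- `H` is symmetric -/
  Hsymm : ∀ ψ φ : H1, ⟪j1 ψ, Hop φ⟫ = ⟪Hop ψ, j1 φ⟫
  /-- `H` is self-adjoint: non-real points belong to `ρ(H)` -/
  res_nonreal : ∀ z : ℂ, z.im ≠ 0 → z ∈ res
  /-- `H` is bounded from below by `lamInf` -/
  res_below : ∀ x : ℝ, x < lamInf → (x : ℂ) ∈ res
  /-- `lamInf` is exactly `inf σ(H)` -/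
  lamInf_not_res : (lamInf : ℂ) ∉ res
  RF_inv_left : ∀ z ∈ res, (RF z).comp (z • j1 - Hop) = ContinuousLinearMap.id ℂ H1
  RF_inv_right : ∀ z ∈ res, (z • j1 - Hop).comp (RF z) = ContinuousLinearMap.id ℂ F
  /-- `H̄` extends `H` -/
  Hbar_ext : Hbar.comp j1 = jm.comp Hop
  /-- `RM z` extends `RF z` -/
  RM_ext : ∀ z ∈ res, (RM z).comp jm = j1.comp (RF z)
  RM_inv_left : ∀ z ∈ res, (RM z).comp (z • jm - Hbar) = ContinuousLinearMap.id ℂ F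
  RM_inv_right : ∀ z ∈ res, (z • jm - Hbar).comp (RM z) = ContinuousLinearMap.id ℂ Hm1
  pair_add : ∀ x y φ, pair (x + y) φ = pair x φ + pair y φ
  pair_smul : ∀ (a : ℂ) x φ, pair (a • x) φ = starRingEnd ℂ a * pair x φ
  pair_addr : ∀ x φ₁ φ₂, pair x (φ₁ + φ₂) = pair x φ₁ + pair x φ₂
  pair_smulr : ∀ (a : ℂ) x φ, pair x (a • φ) = a * pair x φ
  pair_cont : ∀ φ, Continuous fun x => pair x φ
  /-- the pairing extends the scalar product of `𝔉` -/
  pair_jm : ∀ (ψ : F) (φ : H1), pair (jm ψ) φ = ⟪ψ, j1 φ⟫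
  pair_nondeg : ∀ x, (∀ φ, pair x φ = 0) → x = 0
  ns_zero : ∀ ψ, ns 0 ψ = ‖j1 ψ‖
  ns_one : ∀ ψ, ns 1 ψ = ‖ψ‖
  ns_nonneg : ∀ s ψ, 0 ≤ ns s ψ
  ns_mono : ∀ s t : ℝ, 0 ≤ s → s ≤ t → t ≤ 1 → ∀ ψ, ns s ψ ≤ ns t ψ
  /-- interpolation property of the scale of Hilbert spaces -/
  ns_interp : ∀ s : ℝ, 0 ≤ s → s ≤ 1 → ∀ ψ, ns s ψ ≤ ‖ψ‖ ^ s * ‖j1 ψ‖ ^ (1 - s)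
  /-- `Astar` is the dual-pairing adjoint of `A` -/
  Astar_spec : ∀ (ψ : F) (φ : H1), pair (Astar ψ) φ = ⟪ψ, A φ⟫

variable {F H1 Hm1 : Type*}
  [NormedAddCommGroup F] [InnerProductSpace ℂ F] [CompleteSpace F]
  [NormedAddCommGroup H1] [InnerProductSpace ℂ H1] [CompleteSpace H1]
  [NormedAddCommGroup Hm1] [InnerProductSpace ℂ Hm1] [CompleteSpace Hm1]

namespace Ctx

variable (c : Ctx F H1 Hm1)

/-- `G_z := (A R_{z̄})* ∈ 𝔅(𝔉)`. -/
def G (z : ℂ) : F →L[ℂ] F :=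
  ContinuousLinearMap.adjoint (c.A.comp (c.RF (starRingEnd ℂ z)))

/-- `G_z* ∈ 𝔅(𝔉)`, for `z` real this is `G*`. -/
def Gst (lam : ℝ) : F →L[ℂ] F :=
  ContinuousLinearMap.adjoint (c.G (lam : ℂ))

/-- `𝔸 : 𝔥₁ → 𝔉⊕𝔥₁`, `𝔸ψ = Aψ ⊕ ψ`. -/
def Ab : H1 →L[ℂ] (F × H1) :=
  c.A.prod (ContinuousLinearMap.id ℂ H1)

/-- `𝔾_z : 𝔉⊕𝔥₋₁ → 𝔉`, `𝔾_z(ψ⊕φ) = G_zψ + R_zφ`. -/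
def Gb (z : ℂ) : (F × Hm1) →L[ℂ] F :=
  (c.G z).comp (ContinuousLinearMap.fst ℂ F Hm1) +
    (c.RM z).comp (ContinuousLinearMap.snd ℂ F Hm1)

/-- `𝔾_{z̄}* : 𝔉 → 𝔉⊕𝔥₁`, `ψ ↦ (A R_z ψ) ⊕ (R_z ψ)`. -/
def Gbstar (z : ℂ) : F →L[ℂ] (F × H1) :=
  (c.A.comp (c.RF z)).prod (c.RF z)

/-- `M_z = 𝔸(𝔾 - 𝔾_z) = (z-λ∘) 𝔾* 𝔾_z : 𝔉⊕𝔥₋₁ → 𝔉⊕𝔥₁`. -/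
def M (lam : ℝ) (z : ℂ) : (F × Hm1) →L[ℂ] (F × H1) :=
  (z - (lam : ℂ)) • ((c.Gbstar (lam : ℂ)).comp (c.Gb z))

/-- `M' : 𝔉⊕𝔥₋₁ → 𝔉⊕𝔥₁` is a realization of `M_z := 𝔸(𝔾 - 𝔾_z)`, i.e. the second
component of `M' x` is the lift to `𝔥₁` of `(𝔾 - 𝔾_z)x` and the first component is `A`
applied to it. -/
def IsMLift (lam : ℝ) (z : ℂ) (M' : (F × Hm1) →L[ℂ] (F × H1)) : Prop :=
  ∀ x : F × Hm1,
    c.j1 ((M' x).2) = c.Gb (lam : ℂ) x - c.Gb z x ∧ (M' x).1 = c.A ((M' x).2)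

/-- The domain `𝔇 = {ψ ∈ 𝔉 : ψ - Gψ ∈ 𝔥₁}` (with `G = G_{λ∘}`). -/
def Dom (lam : ℝ) : Set F :=
  {ψ | ∃ φ : H1, ψ - c.G (lam : ℂ) ψ = c.j1 φ}

/-- The action of the block operator matrix `Θ_S = [[T_S, 1-G*],[1-G, -R]]` on the element
`ψ ⊕ φ` of its domain `𝔇⊕𝔉`; here `ψ0 ∈ 𝔥₁` is the lift of `(1-G)ψ`, so that
`T_Sψ = (1-G*)S(1-G)ψ = (1-G*)(Sψ0)`. -/
def ThetaS (lam : ℝ) (S : H1 →ₗ[ℂ] F) (ψ : F) (ψ0 : H1) (φ : F) : F × H1 :=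
  (S ψ0 - c.Gst lam (S ψ0) + φ - c.Gst lam φ, ψ0 - c.RF (lam : ℂ) φ)

/-- The action of `Θ_S + M_z` on `ψ ⊕ φ ∈ 𝔇⊕𝔉`. -/
def ThetaMS (lam : ℝ) (S : H1 →ₗ[ℂ] F) (z : ℂ) (ψ : F) (ψ0 : H1) (φ : F) : F × H1 :=
  c.ThetaS lam S ψ ψ0 φ + c.M lam z (ψ, c.jm φ)

/-- `Λ ∈ 𝔅(𝔉⊕𝔥₁, 𝔉⊕𝔥₋₁)` is the (two-sided) inverse of `Θ_S + M_z`. -/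
def IsInvTheta (lam : ℝ) (S : H1 →ₗ[ℂ] F) (z : ℂ)
    (Λ : (F × H1) →L[ℂ] (F × Hm1)) : Prop :=
  (∀ (ψ : F) (ψ0 : H1) (φ : F), c.j1 ψ0 = ψ - c.G (lam : ℂ) ψ →
    Λ (c.ThetaMS lam S z ψ ψ0 φ) = (ψ, c.jm φ)) ∧
  (∀ y : F × H1, ∃ (ψ : F) (ψ0 : H1) (φ : F),
    c.j1 ψ0 = ψ - c.G (lam : ℂ) ψ ∧ Λ y = (ψ, c.jm φ) ∧ c.ThetaMS lam S z ψ ψ0 φ = y)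

/-- `Z_S := {z ∈ ρ(H) : (Θ_S + M_z)⁻¹ ∈ 𝔅(𝔉⊕𝔥₁, 𝔉⊕𝔥₋₁)}`. -/
def ZS (lam : ℝ) (S : H1 →ₗ[ℂ] F) : Set ℂ :=
  {z | z ∈ c.res ∧ ∃ Λ : (F × H1) →L[ℂ] (F × Hm1), c.IsInvTheta lam S z Λ}

/-- `R̂_z = R_z + 𝔾_z Λ 𝔾_{z̄}* : 𝔉 → 𝔉`. -/
def Rhat (z : ℂ) (Λ : (F × H1) →L[ℂ] (F × Hm1)) : F →L[ℂ] F :=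
  c.j1.comp (c.RF z) + (c.Gb z).comp (Λ.comp (c.Gbstar z))

/-- The duality pairing `⟨⟨·,·⟩⟩_{-1,1}` between `𝔉⊕𝔥₋₁` and `𝔉⊕𝔥₁`. -/
def pairX (x : F × Hm1) (y : F × H1) : ℂ :=
  ⟪x.1, y.1⟫ + c.pair x.2 y.2

/-- Assumption (H3): `ran(G_z) ∩ 𝔥₁ = {0}` for all `z ∈ ρ(H)`. -/
def H3 : Prop :=
  ∀ z ∈ c.res, ∀ (ψ : F) (φ : H1), c.G z ψ = c.j1 φ → c.G z ψ = 0

/-- `S` is a symmetric operator (with domain containing `𝔥₁`). -/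
def IsSymmOp (S : H1 →ₗ[ℂ] F) : Prop :=
  ∀ ψ φ : H1, ⟪S ψ, c.j1 φ⟫ = ⟪c.j1 ψ, S φ⟫

/-- `S` is `H`-small with constants `a`, `b`. -/
def HSmall (S : H1 →ₗ[ℂ] F) (a b : ℝ) : Prop :=
  ∀ ψ : H1, ‖S ψ‖ ≤ a * ‖c.Hop ψ‖ + b * ‖c.j1 ψ‖

/-- `HSf ψ ψ0` realizes the action of `H_S = H̄ + A* + A_S` on `ψ ∈ 𝔇` (with `ψ0` the lift
of `(1-G)ψ`): `H_Sψ ∈ 𝔉` is characterized by `H_Sψ = H̄ψ + A*ψ + Aψ0 - T_Sψ` in `𝔥₋₁`. -/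
def IsHSAction (lam : ℝ) (S : H1 →ₗ[ℂ] F) (HSf : F → H1 → F) : Prop :=
  ∀ (ψ : F) (ψ0 : H1), c.j1 ψ0 = ψ - c.G (lam : ℂ) ψ →
    c.jm (HSf ψ ψ0) =
      c.Hbar ψ + c.Astar ψ + c.jm (c.A ψ0 - (S ψ0 - c.Gst lam (S ψ0)))

/-- `Rop = (-(H+W)+z)⁻¹`, the resolvent at `z` of the perturbation of `H` by the
`H`-bounded operator `W` (with domain `𝔥₁`). -/
def IsResolventOf (W : H1 →L[ℂ] F) (z : ℂ) (Rop : F →L[ℂ] F) : Prop :=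
  (∀ ψ : H1, Rop (z • c.j1 ψ - (c.Hop ψ + W ψ)) = c.j1 ψ) ∧
  (∀ χ : F, ∃ ψ : H1, Rop χ = c.j1 ψ ∧ z • c.j1 ψ - (c.Hop ψ + W ψ) = χ)

/-- `Rop = (-H_S+z)⁻¹`, the resolvent at `z` of the operator `H_S` with domain `𝔇` whose
action is realized by `HSf`. -/
def IsResolventOfD (lam : ℝ) (HSf : F → H1 → F) (z : ℂ) (Rop : F →L[ℂ] F) : Prop :=
  (∀ (ψ : F) (ψ0 : H1), c.j1 ψ0 = ψ - c.G (lam : ℂ) ψ →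
    Rop (z • ψ - HSf ψ ψ0) = ψ) ∧
  (∀ χ : F, ∃ (ψ : F) (ψ0 : H1),
    c.j1 ψ0 = ψ - c.G (lam : ℂ) ψ ∧ Rop χ = ψ ∧ z • ψ - HSf ψ ψ0 = χ)

/-- `ψ ∈ 𝔥_s` (for `0 ≤ s ≤ 1`), i.e. `ψ ∈ 𝔉` is the limit of a `‖·‖_s`-Cauchy sequence
of elements of `𝔥₁`. -/
def memHs (s : ℝ) (ψ : F) : Prop :=
  ∃ u : ℕ → H1, Filter.Tendsto (fun n => c.j1 (u n)) Filter.atTop (nhds ψ) ∧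
    ∀ ε > 0, ∃ N, ∀ m ≥ N, ∀ n ≥ N, c.ns s (u m - u n) < ε

/-- `T ∈ 𝔅(𝔥_s, 𝔉)` (with `T` given on `𝔥₁`): `T` is bounded for the `‖·‖_s`-norm. -/
def MemBs (s : ℝ) (T : H1 →L[ℂ] F) : Prop :=
  ∃ C : ℝ, 0 ≤ C ∧ ∀ ψ : H1, ‖T ψ‖ ≤ C * c.ns s ψ

/-- `T` (with domain containing `𝔥₁ ⊆ 𝔥_{1/2}`) is closable as an operator in `𝔉`. -/
def ClosableOp (T : H1 →L[ℂ] F) : Prop :=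
  ∀ (u : ℕ → H1) (χ : F),
    Filter.Tendsto (fun n => c.j1 (u n)) Filter.atTop (nhds 0) →
    Filter.Tendsto (fun n => T (u n)) Filter.atTop (nhds χ) → χ = 0

/-- `Tstar` is (the restriction to `𝔥₁` of) the adjoint of `T`. -/
def IsAdjointOn (T Tstar : H1 →L[ℂ] F) : Prop :=
  ∀ ψ φ : H1, ⟪Tstar ψ, c.j1 φ⟫ = ⟪c.j1 ψ, T φ⟫

/-- `G_{n,z} := (A_n R_{z̄})* ∈ 𝔅(𝔉)`. -/
def Gn (An : H1 →L[ℂ] F) (z : ℂ) : F →L[ℂ] F :=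
  ContinuousLinearMap.adjoint (An.comp (c.RF (starRingEnd ℂ z)))

/-- `B = A_n R A_n* ∈ 𝔅(𝔉)`: since `R A_n*ψ = G_{n,λ∘}ψ ∈ 𝔥₁`, the operator `B` is
`A_n` applied to the lift of `G_{n,λ∘}ψ`. -/
def IsAnRAn (lam : ℝ) (An : H1 →L[ℂ] F) (B : F →L[ℂ] F) : Prop :=
  ∀ ψ : F, ∃ φ : H1, c.j1 φ = c.Gn An (lam : ℂ) ψ ∧ B ψ = An φ

/-- `𝔾_{n,z}` as a bounded operator `𝔉⊕𝔉 → 𝔉`, `ψ⊕φ ↦ G_{n,z}ψ + R_zφ`. -/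
def Gnb (An : H1 →L[ℂ] F) (z : ℂ) : (F × F) →L[ℂ] F :=
  (c.Gn An z).comp (ContinuousLinearMap.fst ℂ F F) +
    (c.j1.comp (c.RF z)).comp (ContinuousLinearMap.snd ℂ F F)

/-- `𝔾_{n,z̄}* : 𝔉 → 𝔉⊕𝔉`, `ψ ↦ (A_n R_z ψ) ⊕ (R_z ψ)`. -/
def Gnbstar (An : H1 →L[ℂ] F) (z : ℂ) : F →L[ℂ] (F × F) :=
  (An.comp (c.RF z)).prod (c.j1.comp (c.RF z))

/-- `M_{n,z} = 𝔸_n(𝔾_n - 𝔾_{n,z}) = (z-λ∘)𝔾_n*𝔾_{n,z} : 𝔉⊕𝔉 → 𝔉⊕𝔥₁ ⊆ 𝔉⊕𝔉`. -/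
def Mn (lam : ℝ) (An : H1 →L[ℂ] F) (z : ℂ) : (F × F) →L[ℂ] (F × F) :=
  (z - (lam : ℂ)) • ((c.Gnbstar An (lam : ℂ)).comp (c.Gnb An z))

/-- `Θ_n = [[E_n - A_nRA_n*, 1-G_n*],[1-G_n, -R]] : 𝔉⊕𝔉 → 𝔉⊕𝔉`. -/
def Thetan (lam : ℝ) (An : H1 →L[ℂ] F) (En AnRAn : F →L[ℂ] F) :
    (F × F) →L[ℂ] (F × F) :=
  ((En - AnRAn).comp (ContinuousLinearMap.fst ℂ F F) +
      ((1 : F →L[ℂ] F) - An.comp (c.RF (lam : ℂ))).comp (ContinuousLinearMap.snd ℂ F F)).prod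
    (((1 : F →L[ℂ] F) - c.Gn An (lam : ℂ)).comp (ContinuousLinearMap.fst ℂ F F) -
      (c.j1.comp (c.RF (lam : ℂ))).comp (ContinuousLinearMap.snd ℂ F F))

end Ctx

namespace Ctx

variable (c : Ctx F H1 Hm1)

lemma Hbar_j1 (φ : H1) : c.Hbar (c.j1 φ) = c.jm (c.Hop φ) :=
  DFunLike.congr_fun c.Hbar_ext φ

lemma RF_smul_j1_sub_Hop {z : ℂ} (hz : z ∈ c.res) (φ : H1) :
    c.RF z ((z • c.j1 - c.Hop) φ) = φ :=
  DFunLike.congr_fun (c.RF_inv_left z hz) φ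

lemma pair_sub (x y : Hm1) (φ : H1) : c.pair (x - y) φ = c.pair x φ - c.pair y φ := by
  rw [sub_eq_add_neg, c.pair_add, ← neg_one_smul ℂ y, c.pair_smul]
  simp [sub_eq_add_neg]

lemma pair_Hbar (χ : F) (φ : H1) : c.pair (c.Hbar χ) φ = ⟪χ, c.Hop φ⟫ := by
  refine c.j1_dense.induction_on χ ?_ fun η => ?_
  · exact isClosed_eq ((c.pair_cont φ).comp c.Hbar.continuous)
      (continuous_id.inner continuous_const)
  · rw [c.Hbar_j1, c.pair_jm, c.Hsymm]

lemma pair_smul_jm_sub_Hbar (z : ℂ) (χ : F) (φ : H1) :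
    c.pair ((z • c.jm - c.Hbar) χ) φ = ⟪χ, (conj z • c.j1 - c.Hop) φ⟫ := by
  simp only [sub_apply, smul_apply, c.pair_sub, c.pair_smul, c.pair_jm, c.pair_Hbar,
    inner_sub_right, inner_smul_right]

/-- `(-H̄ + z) G_z = A*`: pair both sides with `φ ∈ 𝔥₁` and use `R_{z̄} (-H + z̄) φ = φ`. -/
theorem smul_jm_sub_Hbar_G {z : ℂ} (hz : conj z ∈ c.res) (ψ : F) :
    (z • c.jm - c.Hbar) (c.G z ψ) = c.Astar ψ := by
  refine sub_eq_zero.mp (c.pair_nondeg _ fun φ => ?_)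
  rw [c.pair_sub, c.pair_smul_jm_sub_Hbar, G, ContinuousLinearMap.adjoint_inner_left,
    ContinuousLinearMap.comp_apply, c.RF_smul_j1_sub_Hop hz, c.Astar_spec, sub_self]

theorem smul_jm_sub_Hbar_one_sub_G {z : ℂ} (hz : conj z ∈ c.res) (ψ : F) :
    (z • c.jm - c.Hbar) (ψ - c.G z ψ) = z • c.jm ψ - c.Hbar ψ - c.Astar ψ := by
  rw [map_sub, c.smul_jm_sub_Hbar_G hz]
  rfl

/-- On `𝔇`, `H̄ψ + A*ψ = zψ - (-H + z)ψ∘` with `ψ∘ = ψ - G_zψ ∈ 𝔥₁`, which lies in `𝔉`. -/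
theorem jm_eq_Hbar_add_Astar {z : ℂ} (hz : conj z ∈ c.res) {ψ : F} {ψ0 : H1}
    (hψ0 : ψ - c.G z ψ = c.j1 ψ0) :
    c.jm (z • ψ - (z • c.j1 - c.Hop) ψ0) = c.Hbar ψ + c.Astar ψ := by
  have h := c.smul_jm_sub_Hbar_one_sub_G hz ψ
  rw [hψ0, sub_apply, smul_apply, c.Hbar_j1] at h
  rw [map_sub, map_smul, sub_apply, smul_apply, map_sub, map_smul, h]
  abel

end Ctx

theorem statement15_general (c : Ctx F H1 Hm1)
    (lam : ℝ) (hlam : lam < c.lamInf)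
    (S : H1 →ₗ[ℂ] F) :
    (∀ ψ : F, ((lam : ℂ) • c.jm - c.Hbar) (ψ - c.G (lam : ℂ) ψ) =
      (lam : ℂ) • c.jm ψ - c.Hbar ψ - c.Astar ψ) ∧
    (∀ ψ ∈ c.Dom lam, ∃ χ : F, c.jm χ = c.Hbar ψ + c.Astar ψ) ∧
    (∀ (ψ : F) (ψ0 : H1), c.j1 ψ0 = ψ - c.G (lam : ℂ) ψ →
      c.A ψ0 - (S ψ0 - c.Gst lam (S ψ0)) = (c.A ψ0 - S ψ0) + c.Gst lam (S ψ0) ∧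
      ∃ χ : F, c.jm χ =
        c.Hbar ψ + c.Astar ψ + c.jm (c.A ψ0 - (S ψ0 - c.Gst lam (S ψ0)))) := by
  have hres : conj (lam : ℂ) ∈ c.res := by
    rw [Complex.conj_ofReal]
    exact c.res_below lam hlam
  refine ⟨c.smul_jm_sub_Hbar_one_sub_G hres,
    fun ψ ⟨ψ0, hψ0⟩ => ⟨_, c.jm_eq_Hbar_add_Astar hres hψ0⟩, fun ψ ψ0 hψ0 => ⟨by abel, ?_⟩⟩
  exact ⟨((lam : ℂ) • ψ - ((lam : ℂ) • c.j1 - c.Hop) ψ0) + (c.A ψ0 - (S ψ0 - c.Gst lam (S ψ0))),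
    by rw [map_add, c.jm_eq_Hbar_add_Astar hres hψ0.symm]⟩

/-- For every `ψ ∈ 𝔉` one has `(-H̄+λ∘)(1-G)ψ = (-H̄-A*+λ∘)ψ` in `𝔥₋₁`;
consequently `(H̄+A*)|𝔇` is `𝔉`-valued, and for `ψ ∈ 𝔇` one has
`A_Sψ = (A - (1-G*)S)ψ∘ ∈ 𝔉` where `ψ∘ := ψ - Gψ`; hence `H_S = H̄ + A* + A_S` maps `𝔇`
into `𝔉`. -/
theorem statement15 (c : Ctx F H1 Hm1)
    (lam : ℝ) (hlam : lam < c.lamInf)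
    (S : H1 →ₗ[ℂ] F) (hS : c.IsSymmOp S) :
    (∀ ψ : F, ((lam : ℂ) • c.jm - c.Hbar) (ψ - c.G (lam : ℂ) ψ) =
      (lam : ℂ) • c.jm ψ - c.Hbar ψ - c.Astar ψ) ∧
    (∀ ψ ∈ c.Dom lam, ∃ χ : F, c.jm χ = c.Hbar ψ + c.Astar ψ) ∧
    (∀ (ψ : F) (ψ0 : H1), c.j1 ψ0 = ψ - c.G (lam : ℂ) ψ →
      c.A ψ0 - (S ψ0 - c.Gst lam (S ψ0)) = (c.A ψ0 - S ψ0) + c.Gst lam (S ψ0) ∧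
      ∃ χ : F, c.jm χ =
        c.Hbar ψ + c.Astar ψ + c.jm (c.A ψ0 - (S ψ0 - c.Gst lam (S ψ0)))) :=
  statement15_general c lam hlam S
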